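/- arXiv:2509.03076 — 2 statements merged into one kernel-verified Lean document; each statement's English description precedes it below -/
import Mathlib

section
/- Let f be a holomorphic self-map of the unit disk D and fix z_0 ∈ D. Then there exist a holomorphic map h : D → D and automorphisms γ_n of D such that γ_n^{-1} ∘ f^n → h uniformly on compact subsets and moreover γ_n^{-1}(f^n(z_0)) = 0 for all n and h(z_0) = 0. -/
open Complex Metric Filter Set

/-- Inverse hyperbolic tangent. -/
noncomputable def artanh (t : ℝ) : ℝ := (1/2) * Real.log ((1 + t) / (1 - t))

/-- Poincaré distance on the unit disk. -/
noncomputable def pd (z w : ℂ) : ℝ :=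
  artanh (‖(w - z) / (1 - (starRingEnd ℂ) z * w)‖)

/-- Holomorphic self-map of the unit disk. -/
def HolSelfDisk (f : ℂ → ℂ) : Prop :=
  DifferentiableOn ℂ f (ball (0:ℂ) 1) ∧ MapsTo f (ball (0:ℂ) 1) (ball (0:ℂ) 1)

/-- A pair of maps that are mutually inverse holomorphic self-maps of the disk,
i.e. an automorphism of the disk together with its inverse. -/
def IsDiskAutPair (γ γinv : ℂ → ℂ) : Prop :=
  HolSelfDisk γ ∧ HolSelfDisk γinv ∧
  (∀ z ∈ ball (0:ℂ) 1, γinv (γ z) = z) ∧ (∀ z ∈ ball (0:ℂ) 1, γ (γinv z) = z)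

/-!
Write `a n = f^[n] z₀` and `g n = mobius (a n) ∘ f^[n]`, where `mobius a` is the disk
automorphism sending `a` to `0`. By Schwarz–Pick `‖g n z‖` decreases in `n`. If it tends to `0`
at every point, Dini's theorem gives `g n → 0` locally uniformly. Otherwise some `z₁` has
`‖g n z₁‖ ≥ L > 0`; rotating, `G n = c n • g n` with `G n z₁ = t n > 0`. Then
`G (n + 1) = ψ n ∘ G n` for self-maps `ψ n` of the disk with `ψ n 0 = 0` and
`ψ n (t n) = t (n + 1)`, and the Schwarz lemma for `ψ n z / z` shows that `ψ n` moves the points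
of a compact set by at most `C (t n - t (n + 1))`. These increments are summable, so `G n`
converges locally uniformly.
-/

open Topology ComplexConjugate

-- `‖mobius a z‖` is the pseudo-hyperbolic distance, so `pd a z = artanh ‖mobius a z‖`.
noncomputable def mobius (a z : ℂ) : ℂ := (z - a) / (1 - conj a * z)

section Mobius

variable {a z : ℂ}

theorem sq_norm_one_sub_conj_mul_sub_sq_norm_sub (a z : ℂ) :
    ‖1 - conj a * z‖ ^ 2 - ‖z - a‖ ^ 2 = (1 - ‖a‖ ^ 2) * (1 - ‖z‖ ^ 2) := by
  simp only [Complex.sq_norm, normSq_apply, sub_re, sub_im, mul_re, mul_im, one_re, one_im,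
    conj_re, conj_im]
  ring

theorem one_sub_conj_mul_ne_zero (ha : ‖a‖ < 1) (hz : ‖z‖ ≤ 1) : 1 - conj a * z ≠ 0 := by
  refine sub_ne_zero.2 fun h => ?_
  have : ‖conj a * z‖ < 1 := by
    rw [norm_mul, Complex.norm_conj]
    nlinarith [norm_nonneg a, norm_nonneg z]
  simp [← h] at this

theorem norm_one_sub_conj_mul_le_two (ha : ‖a‖ ≤ 1) (hz : ‖z‖ ≤ 1) : ‖1 - conj a * z‖ ≤ 2 := by
  calc ‖1 - conj a * z‖ ≤ ‖(1 : ℂ)‖ + ‖a‖ * ‖z‖ := by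
        simpa only [norm_mul, Complex.norm_conj] using norm_sub_le (1 : ℂ) (conj a * z)
    _ ≤ 2 := by nlinarith [norm_nonneg a, norm_nonneg z, norm_one (α := ℂ)]

theorem one_sub_sq_norm_mobius (ha : ‖a‖ < 1) (hz : ‖z‖ < 1) :
    1 - ‖mobius a z‖ ^ 2 = (1 - ‖a‖ ^ 2) * (1 - ‖z‖ ^ 2) / ‖1 - conj a * z‖ ^ 2 := by
  have hd : ‖1 - conj a * z‖ ≠ 0 := norm_ne_zero_iff.2 (one_sub_conj_mul_ne_zero ha hz.le)
  rw [mobius, norm_div, div_pow, one_sub_div (pow_ne_zero 2 hd),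
    sq_norm_one_sub_conj_mul_sub_sq_norm_sub]

theorem norm_mobius_lt_one (ha : ‖a‖ < 1) (hz : ‖z‖ < 1) : ‖mobius a z‖ < 1 := by
  have h := one_sub_sq_norm_mobius ha hz
  have : 0 < (1 - ‖a‖ ^ 2) * (1 - ‖z‖ ^ 2) / ‖1 - conj a * z‖ ^ 2 := by
    have := one_sub_conj_mul_ne_zero ha hz.le
    have h1 : 0 < 1 - ‖a‖ ^ 2 := by nlinarith [norm_nonneg a]
    have h2 : 0 < 1 - ‖z‖ ^ 2 := by nlinarith [norm_nonneg z]
    positivity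
  nlinarith [norm_nonneg (mobius a z)]

theorem exists_norm_mobius_le {t r : ℝ} (ht₀ : 0 ≤ t) (ht : t < 1) (hr₀ : 0 ≤ r) (hr : r < 1) :
    ∃ ρ, 0 ≤ ρ ∧ ρ < 1 ∧ ∀ a z : ℂ, ‖a‖ ≤ t → ‖z‖ ≤ r → ‖mobius a z‖ ≤ ρ := by
  set δ := (1 - t ^ 2) * (1 - r ^ 2) / 4
  have hδ : 0 < δ := by
    have h1 : 0 < 1 - t ^ 2 := by nlinarith
    have h2 : 0 < 1 - r ^ 2 := by nlinarith
    positivity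
  refine ⟨Real.sqrt (1 - δ), Real.sqrt_nonneg _, (Real.sqrt_lt' one_pos).2 (by linarith),
    fun a z ha hz => ?_⟩
  have ha1 : ‖a‖ < 1 := ha.trans_lt ht
  have hz1 : ‖z‖ < 1 := hz.trans_lt hr
  have hden : ‖1 - conj a * z‖ ^ 2 ≤ 4 := by
    nlinarith [norm_one_sub_conj_mul_le_two ha1.le hz1.le, norm_nonneg (1 - conj a * z)]
  have hnum : (1 - t ^ 2) * (1 - r ^ 2) ≤ (1 - ‖a‖ ^ 2) * (1 - ‖z‖ ^ 2) :=
    mul_le_mul (by nlinarith [norm_nonneg a]) (by nlinarith [norm_nonneg z])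
      (by nlinarith) (by nlinarith [norm_nonneg a])
  have hpos : 0 < ‖1 - conj a * z‖ ^ 2 := by
    have := one_sub_conj_mul_ne_zero ha1 hz1.le
    positivity
  have : δ ≤ 1 - ‖mobius a z‖ ^ 2 := by
    rw [one_sub_sq_norm_mobius ha1 hz1, le_div_iff₀ hpos]
    calc δ * ‖1 - conj a * z‖ ^ 2 ≤ δ * 4 := mul_le_mul_of_nonneg_left hden hδ.le
      _ = (1 - t ^ 2) * (1 - r ^ 2) := by ring
      _ ≤ _ := hnum
  exact Real.le_sqrt_of_sq_le (by linarith)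

@[simp] theorem mobius_self (a : ℂ) : mobius a a = 0 := by simp [mobius]

@[simp] theorem mobius_neg_zero (a : ℂ) : mobius (-a) 0 = a := by simp [mobius]

@[simp] theorem mobius_zero_left (z : ℂ) : mobius 0 z = z := by simp [mobius]

theorem mobius_neg_mobius (ha : ‖a‖ < 1) (hz : ‖z‖ < 1) : mobius (-a) (mobius a z) = z := by
  have hd := one_sub_conj_mul_ne_zero ha hz.le
  have ha' : 1 - conj a * a ≠ 0 := one_sub_conj_mul_ne_zero ha ha.le
  simp only [mobius, map_neg, neg_mul, sub_neg_eq_add]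
  rw [div_add' _ _ _ hd, ← mul_div_assoc, one_add_div hd, div_div_div_cancel_right₀ hd,
    div_eq_iff (by contrapose! ha'; linear_combination ha')]
  ring

theorem mobius_mobius_neg (ha : ‖a‖ < 1) (hz : ‖z‖ < 1) : mobius a (mobius (-a) z) = z := by
  simpa using mobius_neg_mobius (a := -a) (by simpa using ha) hz

theorem differentiableOn_mobius (ha : ‖a‖ < 1) : DifferentiableOn ℂ (mobius a) (ball 0 1) :=
  (differentiableOn_id.sub_const a).div (by fun_prop)
    fun _ hz => one_sub_conj_mul_ne_zero ha (mem_ball_zero_iff.1 hz).le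

end Mobius

theorem holSelfDisk_mobius {a : ℂ} (ha : ‖a‖ < 1) : HolSelfDisk (mobius a) :=
  ⟨differentiableOn_mobius ha, fun _ hz =>
    mem_ball_zero_iff.2 (norm_mobius_lt_one ha (mem_ball_zero_iff.1 hz))⟩

theorem holSelfDisk_const_mul {c : ℂ} (hc : ‖c‖ = 1) : HolSelfDisk (c * ·) :=
  ⟨by fun_prop, fun z hz => by simpa [norm_mul, hc] using hz⟩

namespace HolSelfDisk

variable {F G : ℂ → ℂ} {a z : ℂ}

theorem comp (hF : HolSelfDisk F) (hG : HolSelfDisk G) : HolSelfDisk (F ∘ G) :=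
  ⟨hF.1.comp hG.1 hG.2, hF.2.comp hG.2⟩

theorem iterate (hF : HolSelfDisk F) : ∀ n, HolSelfDisk F^[n]
  | 0 => ⟨differentiableOn_id, mapsTo_id _⟩
  | n + 1 => by rw [Function.iterate_succ']; exact hF.comp (hF.iterate n)

theorem norm_apply_lt_one (hF : HolSelfDisk F) (hz : ‖z‖ < 1) : ‖F z‖ < 1 :=
  mem_ball_zero_iff.1 (hF.2 (mem_ball_zero_iff.2 hz))

theorem norm_apply_le_norm (hF : HolSelfDisk F) (h₀ : F 0 = 0) (hz : ‖z‖ < 1) : ‖F z‖ ≤ ‖z‖ :=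
  Complex.norm_le_norm_of_mapsTo_ball hF.1 (hF.2.mono_right ball_subset_closedBall) h₀ hz

/-- The Schwarz–Pick lemma. -/
theorem norm_mobius_apply_le (hF : HolSelfDisk F) (ha : ‖a‖ < 1) (hz : ‖z‖ < 1) :
    ‖mobius (F a) (F z)‖ ≤ ‖mobius a z‖ := by
  have hΦ := ((holSelfDisk_mobius (hF.norm_apply_lt_one ha)).comp hF).comp
    (holSelfDisk_mobius (a := -a) (by simpa using ha))
  simpa [mobius_neg_mobius ha hz] using
    hΦ.norm_apply_le_norm (by simp) (norm_mobius_lt_one ha hz)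

theorem exists_norm_le_of_isCompact (hF : HolSelfDisk F) {K : Set ℂ} (hKD : K ⊆ ball 0 1)
    (hK : IsCompact K) : ∃ r, 0 < r ∧ r < 1 ∧ ∀ z ∈ K, ‖F z‖ ≤ r := by
  have hFK : IsCompact (F '' K) := hK.image_of_continuousOn (hF.1.continuousOn.mono hKD)
  obtain ⟨r, ⟨hr₀, hr₁⟩, hr⟩ :=
    exists_pos_lt_subset_ball one_pos hFK.isClosed (image_subset_iff.2 (hKD.trans hF.2))
  exact ⟨r, hr₀, hr₁, fun z hz => (mem_ball_zero_iff.1 (hr (mem_image_of_mem F hz))).le⟩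

end HolSelfDisk

theorem mapsTo_ball_or_eqOn_const_of_mapsTo_closedBall {u : ℂ → ℂ} {U : Set ℂ}
    (hU : IsPreconnected U) (hUo : IsOpen U) (hu : DifferentiableOn ℂ u U) {R : ℝ}
    (hmaps : MapsTo u U (closedBall 0 R)) : MapsTo u U (ball 0 R) ∨ ∃ c, EqOn u (fun _ => c) U := by
  by_cases h : ∃ w ∈ U, ‖u w‖ = R
  · obtain ⟨w, hw, hwR⟩ := h
    refine Or.inr ⟨u w, Complex.eqOn_of_isPreconnected_of_isMaxOn_norm hU hUo hu hw fun x hx => ?_⟩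
    simpa [hwR] using hmaps hx
  · push Not at h
    exact Or.inl fun x hx =>
      mem_ball_zero_iff.2 ((mem_closedBall_zero_iff.1 (hmaps hx)).lt_of_ne (h x hx))

theorem norm_one_sub_le_of_norm_mobius_le {p ρ : ℝ} {w : ℂ} (hp₀ : 0 ≤ p) (hp₁ : p < 1)
    (hw : ‖w‖ < 1) (hρ : ρ < 1) (hpw : ‖mobius p w‖ ≤ ρ) :
    ‖1 - w‖ ≤ (1 + ρ) / (1 - ρ) * (1 - p) := by
  have hρ₀ : 0 ≤ ρ := (norm_nonneg _).trans hpw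
  have hd : 1 - (p : ℂ) * w ≠ 0 := by
    simpa using one_sub_conj_mul_ne_zero (a := p) (by simpa [abs_of_nonneg hp₀] using hp₁) hw.le
  have h₁ : ‖w - p‖ ≤ ρ * ‖1 - p * w‖ := by
    rwa [mobius, Complex.conj_ofReal, norm_div, div_le_iff₀ (norm_pos_iff.2 hd)] at hpw
  have h₂ : ‖1 - p * w‖ ≤ (1 - p) + p * ‖1 - w‖ := by
    calc ‖1 - p * w‖ = ‖((1 - p : ℝ) : ℂ) + p * (1 - w)‖ := by push_cast; ring_nf
      _ ≤ ‖((1 - p : ℝ) : ℂ)‖ + ‖(p : ℂ) * (1 - w)‖ := norm_add_le _ _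
      _ = (1 - p) + p * ‖1 - w‖ := by
        rw [norm_mul, Complex.norm_real, Complex.norm_real, Real.norm_of_nonneg (by linarith),
          Real.norm_of_nonneg hp₀]
  have h₃ : ‖1 - w‖ ≤ (1 - p) + ‖w - p‖ := by
    calc ‖1 - w‖ = ‖((1 - p : ℝ) : ℂ) - (w - p)‖ := by push_cast; ring_nf
      _ ≤ ‖((1 - p : ℝ) : ℂ)‖ + ‖w - p‖ := norm_sub_le _ _
      _ = (1 - p) + ‖w - p‖ := by rw [Complex.norm_real, Real.norm_of_nonneg (by linarith)]
  rw [div_mul_eq_mul_div, le_div_iff₀ (by linarith)]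
  nlinarith [mul_le_mul_of_nonneg_left h₂ hρ₀,
    mul_nonneg (mul_nonneg hρ₀ (norm_nonneg (1 - w))) (sub_nonneg.2 hp₁.le)]

theorem HolSelfDisk.norm_sub_self_le {ψ : ℂ → ℂ} (hψ : HolSelfDisk ψ) (hψ₀ : ψ 0 = 0)
    {t s ρ : ℝ} (ht₀ : 0 < t) (ht₁ : t < 1) (hs : 0 ≤ s) (hψt : ψ t = s) (hρ : ρ < 1) {z : ℂ}
    (hz : ‖z‖ < 1) (hzρ : ‖mobius t z‖ ≤ ρ) :
    ‖ψ z - z‖ ≤ (1 + ρ) / (1 - ρ) * (1 - s / t) := by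
  -- `u z = ψ z / z` maps the disk into the closed disk and `t` to `s / t`; Schwarz–Pick for `u`
  -- at `t` bounds `‖1 - u z‖`, unless `u` is constant by the maximum modulus principle.
  set u := dslope ψ 0
  have hzD : z ∈ ball (0 : ℂ) 1 := mem_ball_zero_iff.2 hz
  have htD : (t : ℂ) ∈ ball (0 : ℂ) 1 := by simpa [abs_of_pos ht₀] using ht₁
  have hψu : ∀ w, ψ w = w * u w := fun w => by simpa [hψ₀] using (sub_smul_dslope ψ 0 w).symm
  have hu : DifferentiableOn ℂ u (ball 0 1) :=
    (differentiableOn_dslope (isOpen_ball.mem_nhds (mem_ball_self one_pos))).2 hψ.1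
  have hu_le : MapsTo u (ball 0 1) (closedBall 0 1) := fun w hw => by
    simpa using Complex.norm_dslope_le_div_of_mapsTo_ball hψ.1
      (by simpa [hψ₀] using hψ.2.mono_right ball_subset_closedBall) hw
  have hut : u t = ((s / t : ℝ) : ℂ) := by
    rw [Complex.ofReal_div, eq_div_iff (Complex.ofReal_ne_zero.2 ht₀.ne'), mul_comm, ← hψu, hψt]
  have hp₀ : 0 ≤ s / t := div_nonneg hs ht₀.le
  have hp₁ : s / t ≤ 1 := by simpa [hut, abs_of_nonneg hs, abs_of_pos ht₀] using hu_le htD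
  have hρ₀ : 0 ≤ ρ := (norm_nonneg _).trans hzρ
  have hmain : ‖1 - u z‖ ≤ (1 + ρ) / (1 - ρ) * (1 - s / t) := by
    rcases mapsTo_ball_or_eqOn_const_of_mapsTo_closedBall (convex_ball (0 : ℂ) 1).isPreconnected
      isOpen_ball hu hu_le with hu_ball | ⟨c, hc⟩
    · have hSP := HolSelfDisk.norm_mobius_apply_le ⟨hu, hu_ball⟩ (mem_ball_zero_iff.1 htD) hz
      have hut₁ := mem_ball_zero_iff.1 (hu_ball htD)
      rw [hut] at hSP hut₁
      exact norm_one_sub_le_of_norm_mobius_le hp₀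
        (by simpa [abs_of_nonneg hs, abs_of_pos ht₀] using hut₁)
        (mem_ball_zero_iff.1 (hu_ball hzD)) hρ (hSP.trans hzρ)
    · have huz : u z = ((s / t : ℝ) : ℂ) := by rw [hc hzD, ← hut, hc htD]
      have hK : 1 ≤ (1 + ρ) / (1 - ρ) := by rw [le_div_iff₀ (by linarith)]; linarith
      rw [huz, ← Complex.ofReal_one, ← Complex.ofReal_sub, Complex.norm_real,
        Real.norm_of_nonneg (by linarith)]
      nlinarith
  calc ‖ψ z - z‖ = ‖z‖ * ‖1 - u z‖ := by
        rw [hψu z, show z * u z - z = -(z * (1 - u z)) by ring, norm_neg, norm_mul]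
    _ ≤ ‖1 - u z‖ := mul_le_of_le_one_left (norm_nonneg _) hz.le
    _ ≤ _ := hmain

theorem tendstoUniformlyOn_of_norm_succ_sub_le {α E : Type*} [NormedAddCommGroup E]
    [CompleteSpace E] {F : ℕ → α → E} {u : ℕ → ℝ} (hu : Summable u) {s : Set α}
    (hF : ∀ n, ∀ x ∈ s, ‖F (n + 1) x - F n x‖ ≤ u n) :
    TendstoUniformlyOn F (fun x => F 0 x + ∑' n, (F (n + 1) x - F n x)) atTop s := by
  have hsum := tendstoUniformlyOn_tsum_nat hu hF
  rw [Metric.tendstoUniformlyOn_iff] at hsum ⊢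
  intro ε hε
  filter_upwards [hsum ε hε] with N hN x hx
  have hFN : F N x = F 0 x + ∑ n ∈ Finset.range N, (F (n + 1) x - F n x) := by
    rw [Finset.sum_range_sub (fun n => F n x) N]
    abel
  rw [hFN, dist_add_left]
  exact hN x hx

theorem exists_tendstoLocallyUniformlyOn_of_succ_eq_comp {G ψ : ℕ → ℂ → ℂ} {t : ℕ → ℝ}
    {L : ℝ} {z₁ : ℂ} (hG₀ : HolSelfDisk (G 0)) (hψ : ∀ n, HolSelfDisk (ψ n))
    (hψ₀ : ∀ n, ψ n 0 = 0) (hG : ∀ n, ∀ z ∈ ball (0 : ℂ) 1, G (n + 1) z = ψ n (G n z))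
    (hz₁ : z₁ ∈ ball (0 : ℂ) 1) (hGz₁ : ∀ n, G n z₁ = t n) (hL : 0 < L) (hLt : ∀ n, L ≤ t n) :
    ∃ h, TendstoLocallyUniformlyOn G h atTop (ball (0 : ℂ) 1) := by
  have hmaps : ∀ n, MapsTo (G n) (ball 0 1) (ball 0 1) := by
    intro n
    induction n with
    | zero => exact hG₀.2
    | succ n ih => intro z hz; rw [hG n z hz]; exact (hψ n).2 (ih hz)
  have hnorm : ∀ n, ∀ z ∈ ball (0 : ℂ) 1, ‖G n z‖ ≤ ‖G 0 z‖ := by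
    intro n
    induction n with
    | zero => simp
    | succ n ih =>
      intro z hz
      rw [hG n z hz]
      exact ((hψ n).norm_apply_le_norm (hψ₀ n) (mem_ball_zero_iff.1 (hmaps n hz))).trans (ih z hz)
  have ht₀ : ∀ n, 0 < t n := fun n => hL.trans_le (hLt n)
  have ht_norm : ∀ n, ‖(t n : ℂ)‖ = t n := fun n => by simp [abs_of_pos (ht₀ n)]
  have ht₁ : ∀ n, t n < 1 := fun n => by
    simpa only [hGz₁, ht_norm] using mem_ball_zero_iff.1 (hmaps n hz₁)
  have hψt : ∀ n, ψ n (t n) = t (n + 1) := fun n => by rw [← hGz₁, ← hGz₁, hG n z₁ hz₁]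
  have ht_anti : Antitone t := antitone_nat_of_succ_le fun n => by
    simpa only [hψt, ht_norm] using
      (hψ n).norm_apply_le_norm (hψ₀ n) ((ht_norm n).trans_lt (ht₁ n))
  have hsum : Summable fun n => t n - t (n + 1) :=
    summable_of_sum_range_le (c := t 0 - L) (fun n => sub_nonneg.2 (ht_anti n.le_succ)) fun n => by
      rw [Finset.sum_range_sub']
      linarith [hLt n]
  refine ⟨fun z => G 0 z + ∑' n, (G (n + 1) z - G n z),
    (tendstoLocallyUniformlyOn_iff_forall_isCompact isOpen_ball).2 fun K hKD hK => ?_⟩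
  obtain ⟨r, hr₀, hr₁, hr⟩ := hG₀.exists_norm_le_of_isCompact hKD hK
  obtain ⟨ρ, hρ₀, hρ₁, hρ⟩ := exists_norm_mobius_le (ht₀ 0).le (ht₁ 0) hr₀.le hr₁
  set C := (1 + ρ) / (1 - ρ)
  have hC : 0 ≤ C := div_nonneg (by linarith) (by linarith)
  refine tendstoUniformlyOn_of_norm_succ_sub_le (hsum.mul_left (C / L)) fun n z hz => ?_
  have hzD := hKD hz
  have hstep := (hψ n).norm_sub_self_le (hψ₀ n) (ht₀ n) (ht₁ n) (ht₀ (n + 1)).le (hψt n) hρ₁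
    (mem_ball_zero_iff.1 (hmaps n hzD))
    (hρ _ _ ((ht_norm n).trans_le (ht_anti n.zero_le)) ((hnorm n z hzD).trans (hr z hz)))
  rw [← hG n z hzD] at hstep
  calc ‖G (n + 1) z - G n z‖ ≤ C * (1 - t (n + 1) / t n) := hstep
    _ = C * ((t n - t (n + 1)) / t n) := by rw [one_sub_div (ht₀ n).ne']
    _ ≤ C * ((t n - t (n + 1)) / L) :=
      mul_le_mul_of_nonneg_left
        (div_le_div_of_nonneg_left (sub_nonneg.2 (ht_anti n.le_succ)) hL (hLt n)) hC
    _ = C / L * (t n - t (n + 1)) := by ring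

theorem isDiskAutPair_mobius_comp_mul {a c : ℂ} (ha : ‖a‖ < 1) (hc : ‖c‖ = 1) :
    IsDiskAutPair (mobius (-a) ∘ (c⁻¹ * ·)) ((c * ·) ∘ mobius a) := by
  have hc₀ : c ≠ 0 := norm_ne_zero_iff.1 (by simp [hc])
  have ha' : ‖-a‖ < 1 := by rwa [norm_neg]
  refine ⟨(holSelfDisk_mobius ha').comp (holSelfDisk_const_mul (by simp [hc])),
    (holSelfDisk_const_mul hc).comp (holSelfDisk_mobius ha), fun z hz => ?_, fun z hz => ?_⟩
  · rw [mem_ball_zero_iff] at hz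
    simp [mobius_mobius_neg ha (by simpa [hc] : ‖c⁻¹ * z‖ < 1), hc₀]
  · simp [mobius_neg_mobius ha (mem_ball_zero_iff.1 hz), hc₀]

theorem HolSelfDisk.of_tendstoLocallyUniformlyOn {G : ℕ → ℂ → ℂ} {h : ℂ → ℂ} {z₀ : ℂ}
    (hG : ∀ n, HolSelfDisk (G n)) (hz₀ : ‖z₀‖ < 1) (hG₀ : ∀ n, G n z₀ = 0)
    (hlim : TendstoLocallyUniformlyOn G h atTop (ball 0 1)) : HolSelfDisk h ∧ h z₀ = 0 := by
  refine ⟨⟨hlim.differentiableOn (Eventually.of_forall fun n => (hG n).1) isOpen_ball,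
    fun z hz => ?_⟩, ?_⟩
  · have hz' := mem_ball_zero_iff.1 hz
    have hle : ‖h z‖ ≤ ‖mobius z₀ z‖ :=
      le_of_tendsto (hlim.tendsto_at hz).norm (Eventually.of_forall fun n => by
        simpa [hG₀] using (hG n).norm_mobius_apply_le hz₀ hz')
    exact mem_ball_zero_iff.2 (hle.trans_lt (norm_mobius_lt_one hz₀ hz'))
  · exact tendsto_nhds_unique (hlim.tendsto_at (mem_ball_zero_iff.2 hz₀)) (by simp [hG₀])

section Iterates

variable {f : ℂ → ℂ} {z₀ : ℂ}

theorem antitone_norm_mobius_iterate (hf : HolSelfDisk f) (hz₀ : ‖z₀‖ < 1) {z : ℂ}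
    (hz : ‖z‖ < 1) : Antitone fun n => ‖mobius (f^[n] z₀) (f^[n] z)‖ :=
  antitone_nat_of_succ_le fun n => by
    simpa only [Function.iterate_succ_apply'] using
      hf.norm_mobius_apply_le ((hf.iterate n).norm_apply_lt_one hz₀)
        ((hf.iterate n).norm_apply_lt_one hz)

theorem tendstoLocallyUniformlyOn_mobius_iterate_zero (hf : HolSelfDisk f) (hz₀ : ‖z₀‖ < 1)
    (h : ∀ z ∈ ball (0 : ℂ) 1,
      Tendsto (fun n => ‖mobius (f^[n] z₀) (f^[n] z)‖) atTop (𝓝 0)) :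
    TendstoLocallyUniformlyOn (fun n z => mobius (f^[n] z₀) (f^[n] z)) 0 atTop (ball 0 1) := by
  have hDini : TendstoLocallyUniformlyOn (fun n z => ‖mobius (f^[n] z₀) (f^[n] z)‖) 0 atTop
      (ball 0 1) :=
    Antitone.tendstoLocallyUniformlyOn_of_forall_tendsto
      (fun n => ((holSelfDisk_mobius ((hf.iterate n).norm_apply_lt_one hz₀)).comp
        (hf.iterate n)).1.continuousOn.norm)
      (fun z hz => antitone_norm_mobius_iterate hf hz₀ (mem_ball_zero_iff.1 hz))
      continuousOn_const h
  rw [Metric.tendstoLocallyUniformlyOn_iff] at hDini ⊢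
  simpa only [Pi.zero_apply, dist_zero_left, norm_norm] using hDini

theorem exists_tendstoLocallyUniformlyOn_mul_mobius_iterate_of_le (hf : HolSelfDisk f)
    (hz₀ : ‖z₀‖ < 1) {z₁ : ℂ} (hz₁ : z₁ ∈ ball (0 : ℂ) 1) {L : ℝ} (hL : 0 < L)
    (hLz₁ : ∀ n, L ≤ ‖mobius (f^[n] z₀) (f^[n] z₁)‖) :
    ∃ (c : ℕ → ℂ) (h : ℂ → ℂ), (∀ n, ‖c n‖ = 1) ∧
      TendstoLocallyUniformlyOn (fun n z => c n * mobius (f^[n] z₀) (f^[n] z)) h atTop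
        (ball 0 1) := by
  set a : ℕ → ℂ := fun n => f^[n] z₀
  set w : ℕ → ℂ := fun n => mobius (a n) (f^[n] z₁)
  have ha : ∀ n, ‖a n‖ < 1 := fun n => (hf.iterate n).norm_apply_lt_one hz₀
  have hw : ∀ n, w n ≠ 0 := fun n => norm_ne_zero_iff.1 (hL.trans_le (hLz₁ n)).ne'
  set c : ℕ → ℂ := fun n => ‖w n‖ / w n
  have hc : ∀ n, ‖c n‖ = 1 := fun n => by simp [c, hw n]
  have hpair := fun n => isDiskAutPair_mobius_comp_mul (ha n) (hc n)
  obtain ⟨h, hlim⟩ := exists_tendstoLocallyUniformlyOn_of_succ_eq_comp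
    (G := fun n z => c n * mobius (a n) (f^[n] z))
    (ψ := fun n => ((c (n + 1) * ·) ∘ mobius (a (n + 1))) ∘ f ∘ mobius (-a n) ∘ ((c n)⁻¹ * ·))
    (t := fun n => ‖w n‖) ((hpair 0).2.1.comp (hf.iterate 0))
    (fun n => ((hpair (n + 1)).2.1.comp hf).comp (hpair n).1)
    (fun n => by simp [a, Function.iterate_succ_apply'])
    (fun n z hz => by
      have := (hpair n).2.2.2 _ ((hf.iterate n).2 hz)
      simp only [Function.comp_apply] at this ⊢
      rw [this, Function.iterate_succ_apply'])
    hz₁ (fun n => by simp [c, w, hw n]) hL hLz₁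
  exact ⟨c, h, hc, hlim⟩

theorem exists_tendstoLocallyUniformlyOn_mul_mobius_iterate (hf : HolSelfDisk f)
    (hz₀ : ‖z₀‖ < 1) :
    ∃ (c : ℕ → ℂ) (h : ℂ → ℂ), (∀ n, ‖c n‖ = 1) ∧
      TendstoLocallyUniformlyOn (fun n z => c n * mobius (f^[n] z₀) (f^[n] z)) h atTop
        (ball 0 1) := by
  by_cases hpos : ∃ z₁ ∈ ball (0 : ℂ) 1, ∃ L > 0, ∀ n, L ≤ ‖mobius (f^[n] z₀) (f^[n] z₁)‖
  · obtain ⟨z₁, hz₁, L, hL, hLz₁⟩ := hpos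
    exact exists_tendstoLocallyUniformlyOn_mul_mobius_iterate_of_le hf hz₀ hz₁ hL hLz₁
  · push Not at hpos
    refine ⟨1, 0, fun _ => norm_one, ?_⟩
    simpa using tendstoLocallyUniformlyOn_mobius_iterate_zero hf hz₀ fun z hz =>
      tendsto_order.2 ⟨fun ε hε => Eventually.of_forall fun n => hε.trans_le (norm_nonneg _),
        fun ε hε => by
          obtain ⟨N, hN⟩ := hpos z hz ε hε
          exact eventually_atTop.2 ⟨N, fun n hn =>
            (antitone_norm_mobius_iterate hf hz₀ (mem_ball_zero_iff.1 hz) hn).trans_lt hN⟩⟩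

end Iterates

theorem stmt3 (f : ℂ → ℂ) (hf : HolSelfDisk f) (z₀ : ℂ) (hz₀ : z₀ ∈ ball (0:ℂ) 1) :
    ∃ (h : ℂ → ℂ) (γ γinv : ℕ → ℂ → ℂ),
      HolSelfDisk h ∧ (∀ n, IsDiskAutPair (γ n) (γinv n)) ∧
      TendstoLocallyUniformlyOn (fun n z => γinv n (f^[n] z)) h atTop (ball (0:ℂ) 1) ∧
      (∀ n, γinv n (f^[n] z₀) = 0) ∧ h z₀ = 0 := by
  have hz₀' := mem_ball_zero_iff.1 hz₀
  obtain ⟨c, h, hc, hlim⟩ := exists_tendstoLocallyUniformlyOn_mul_mobius_iterate hf hz₀'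
  set γinv : ℕ → ℂ → ℂ := fun n => (c n * ·) ∘ mobius (f^[n] z₀)
  have hpair : ∀ n, IsDiskAutPair (mobius (-f^[n] z₀) ∘ ((c n)⁻¹ * ·)) (γinv n) :=
    fun n => isDiskAutPair_mobius_comp_mul ((hf.iterate n).norm_apply_lt_one hz₀') (hc n)
  have hγinv₀ : ∀ n, γinv n (f^[n] z₀) = 0 := fun n => by simp [γinv]
  obtain ⟨hh, hhz₀⟩ := HolSelfDisk.of_tendstoLocallyUniformlyOn
    (fun n => (hpair n).2.1.comp (hf.iterate n)) hz₀' hγinv₀ hlim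
  exact ⟨h, _, γinv, hh, hpair, hlim, hγinv₀, hhz₀⟩
end

section
/- Let F be a holomorphic self-map of the upper half-plane H⁺, parabolic with Wolff point at ∞ and with positive hyperbolic step (i.e., s^F(w) > 0 for some, equivalently every, w ∈ H⁺). Then lim_{n→∞} |arg F^n(w) − π/2| = π/2 for every w ∈ H⁺, i.e., every orbit converges to ∞ tangentially to the real axis. -/
/-!
If infinitely many points `z` of the orbit lay in a cone `c ‖z‖ ≤ Im z`, they would converge to
`∞` non-tangentially, so `F z / z → 1` along them. Inside the cone this forces the
pseudo-hyperbolic distance `‖F z - z‖ / ‖F z - conj z‖ ≤ ‖F z / z - 1‖ / c` to tend to `0`,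
contradicting the positive hyperbolic step. Hence the orbit eventually leaves every cone, i.e.
`arg F^[n] w` tends to `{0, π}`.
-/

open Complex Metric Filter Set

/-- The upper half-plane as a subset of ℂ. -/
def UHP : Set ℂ := {w : ℂ | 0 < w.im}

/-- Poincaré distance on the upper half-plane. -/
noncomputable def pdH (w₁ w₂ : ℂ) : ℝ :=
  artanh ‖(w₂ - w₁) / (w₂ - (starRingEnd ℂ) w₁)‖

/-- Holomorphic self-map of the upper half-plane. -/
def HolSelfUHP (F : ℂ → ℂ) : Prop :=
  DifferentiableOn ℂ F UHP ∧ MapsTo F UHP UHP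

/-- A sequence in the upper half-plane converges non-tangentially to ∞. -/
def NonTangToInf (w : ℕ → ℂ) : Prop :=
  Tendsto (fun n => ‖w n‖) atTop atTop ∧
  ∃ ε > 0, ∀ n, ε * ‖w n‖ ≤ (w n).im

/-- `F` is a parabolic holomorphic self-map of the upper half-plane with Wolff point ∞:
fixed-point-free, iterates tend to ∞ locally uniformly, and `F w / w → 1` along
sequences converging non-tangentially to ∞. -/
def ParabolicAtInf (F : ℂ → ℂ) : Prop :=
  HolSelfUHP F ∧ (∀ w ∈ UHP, F w ≠ w) ∧
  (∀ K ⊆ UHP, IsCompact K → ∀ M : ℝ,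
    ∀ᶠ n in atTop, ∀ w ∈ K, M ≤ ‖F^[n] w‖) ∧
  (∀ w : ℕ → ℂ, (∀ n, w n ∈ UHP) → NonTangToInf w →
    Tendsto (fun n => F (w n) / w n) atTop (nhds 1))

open scoped Topology ComplexConjugate

lemma artanh_zero : artanh 0 = 0 := by simp [artanh]

lemma continuousAt_artanh_zero : ContinuousAt artanh 0 := by
  have h : ContinuousAt (fun t : ℝ => (1 + t) / (1 - t)) 0 :=
    (continuousAt_const.add continuousAt_id).div
      (continuousAt_const.sub continuousAt_id) (by norm_num)
  exact continuousAt_const.mul (h.log (by norm_num))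

lemma sin_mul_norm_le_im_of_abs_arg_sub_le {z : ℂ} {ε : ℝ} (hε : 0 ≤ ε)
    (h : |z.arg - Real.pi / 2| ≤ Real.pi / 2 - ε) : Real.sin ε * ‖z‖ ≤ z.im := by
  have hsin : Real.sin ε ≤ Real.sin z.arg := by
    have hcos := Real.cos_le_cos_of_nonneg_of_le_pi (abs_nonneg _)
      (by linarith [Real.pi_pos]) h
    rwa [Real.cos_abs, Real.cos_pi_div_two_sub, Real.cos_sub_pi_div_two] at hcos
  calc Real.sin ε * ‖z‖ ≤ Real.sin z.arg * ‖z‖ := by gcongr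
    _ = z.im := by
      rw [sin_arg]
      rcases eq_or_ne z 0 with rfl | hz
      · simp
      · exact div_mul_cancel₀ _ (norm_ne_zero_iff.2 hz)

/-- The point is that `‖w - conj z‖ ≥ Im z`. -/
lemma norm_sub_div_sub_conj_le {z w : ℂ} (hz : 0 < z.im) (h : ‖w - z‖ ≤ z.im) :
    ‖(w - z) / (w - conj z)‖ ≤ ‖w - z‖ / z.im := by
  have hden : z.im ≤ ‖w - conj z‖ := by
    have h2 : ‖z - conj z‖ = 2 * z.im := by
      rw [sub_conj, norm_mul, norm_I, mul_one, norm_real, Real.norm_of_nonneg (by positivity)]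
    have h3 := norm_sub_le_norm_sub_add_norm_sub z w (conj z)
    rw [h2, norm_sub_rev] at h3
    linarith
  rw [norm_div]
  exact div_le_div_of_nonneg_left (norm_nonneg _) hz hden

lemma norm_sub_div_sub_conj_le_of_mem_cone {z w : ℂ} {c : ℝ} (hc : 0 < c) (hz : 0 < z.im)
    (hcone : c * ‖z‖ ≤ z.im) (hw : ‖w / z - 1‖ ≤ c) :
    ‖(w - z) / (w - conj z)‖ ≤ ‖w / z - 1‖ / c := by
  have hz0 : z ≠ 0 := fun h => by simp [h] at hz
  have hsub : ‖w - z‖ = ‖z‖ * ‖w / z - 1‖ := by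
    rw [← norm_mul, mul_sub, mul_div_cancel₀ _ hz0, mul_one]
  have hnorm : ‖z‖ ≤ z.im / c := (le_div_iff₀' hc).2 hcone
  have hle : ‖w - z‖ ≤ z.im / c * ‖w / z - 1‖ := by
    rw [hsub]; gcongr
  calc ‖(w - z) / (w - conj z)‖ ≤ ‖w - z‖ / z.im := by
        refine norm_sub_div_sub_conj_le hz (hle.trans ?_)
        calc z.im / c * ‖w / z - 1‖ ≤ z.im / c * c := by gcongr
          _ = z.im := div_mul_cancel₀ _ hc.ne'
    _ ≤ z.im / c * ‖w / z - 1‖ / z.im := by gcongr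
    _ = ‖w / z - 1‖ / c := by field_simp

lemma tendsto_pdH_zero_of_tendsto_div_one {u v : ℕ → ℂ} {c : ℝ} (hc : 0 < c)
    (hu : ∀ n, u n ∈ UHP) (hcone : ∀ n, c * ‖u n‖ ≤ (u n).im)
    (hv : Tendsto (fun n => v n / u n) atTop (𝓝 1)) :
    Tendsto (fun n => pdH (u n) (v n)) atTop (𝓝 0) := by
  have hdist : Tendsto (fun n => ‖v n / u n - 1‖) atTop (𝓝 0) := by
    simpa using (hv.sub_const 1).norm
  have hquot : Tendsto (fun n => ‖(v n - u n) / (v n - conj (u n))‖) atTop (𝓝 0) := by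
    refine squeeze_zero' (Eventually.of_forall fun n => norm_nonneg _) ?_
      (by simpa using hdist.div_const c)
    filter_upwards [hdist.eventually (eventually_le_nhds hc)] with n hn
    exact norm_sub_div_sub_conj_le_of_mem_cone hc (hu n) (hcone n) hn
  simpa [pdH, artanh_zero, Function.comp_def] using continuousAt_artanh_zero.tendsto.comp hquot

namespace ParabolicAtInf

variable {F : ℂ → ℂ}

lemma tendsto_pdH_zero {u : ℕ → ℂ} (hF : ParabolicAtInf F) (hu : ∀ n, u n ∈ UHP)
    (hnt : NonTangToInf u) : Tendsto (fun n => pdH (u n) (F (u n))) atTop (𝓝 0) := by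
  obtain ⟨c, hc, hcone⟩ := hnt.2
  exact tendsto_pdH_zero_of_tendsto_div_one hc hu hcone (hF.2.2.2 u hu hnt)

lemma tendsto_norm_iterate {w : ℂ} (hF : ParabolicAtInf F) (hw : w ∈ UHP) :
    Tendsto (fun n => ‖F^[n] w‖) atTop atTop :=
  tendsto_atTop.2 fun M =>
    (hF.2.2.1 {w} (singleton_subset_iff.2 hw) isCompact_singleton M).mono fun _ h => h w rfl

/-- Otherwise a subsequence of the orbit converges non-tangentially, and along it the
hyperbolic step tends to `0`. -/
lemma eventually_im_iterate_lt {w : ℂ} {s c : ℝ} (hF : ParabolicAtInf F) (hw : w ∈ UHP)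
    (hs : 0 < s) (hstep : Tendsto (fun n => pdH (F^[n] w) (F^[n + 1] w)) atTop (𝓝 s))
    (hc : 0 < c) : ∀ᶠ n in atTop, (F^[n] w).im < c * ‖F^[n] w‖ := by
  by_contra hnot
  obtain ⟨φ, hφ, hcone⟩ := extraction_of_frequently_atTop
    ((not_eventually.1 hnot).mono fun _ h => not_lt.1 h)
  have horbit : ∀ n, F^[n] w ∈ UHP := fun n => hF.1.2.iterate n hw
  have hnt : NonTangToInf fun k => F^[φ k] w :=
    ⟨(tendsto_norm_iterate hF hw).comp hφ.tendsto_atTop, c, hc, hcone⟩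
  have hzero := tendsto_pdH_zero hF (fun k => horbit (φ k)) hnt
  have hsub : Tendsto (fun k => pdH (F^[φ k] w) (F (F^[φ k] w))) atTop (𝓝 s) := by
    simpa only [Function.comp_def, Function.iterate_succ_apply'] using hstep.comp hφ.tendsto_atTop
  exact hs.ne' (tendsto_nhds_unique hsub hzero)

end ParabolicAtInf

theorem stmt17 (F : ℂ → ℂ) (hF : ParabolicAtInf F)
    (hstep : ∀ w ∈ UHP, ∃ s > 0,
      Tendsto (fun n => pdH (F^[n] w) (F^[n+1] w)) atTop (nhds s)) :
    ∀ w ∈ UHP,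
      Tendsto (fun n => |(F^[n] w).arg - Real.pi / 2|) atTop (nhds (Real.pi / 2)) := by
  intro w hw
  obtain ⟨s, hs, hlim⟩ := hstep w hw
  have hpi := Real.pi_pos
  refine tendsto_order.2 ⟨fun a ha => ?_, fun a ha => Eventually.of_forall fun n => ?_⟩
  · set ε := min (Real.pi / 2 - a) (Real.pi / 2)
    have hε : 0 < ε := lt_min (by linarith) (by linarith)
    have hsin : 0 < Real.sin ε :=
      Real.sin_pos_of_pos_of_lt_pi hε (by linarith [min_le_right (Real.pi / 2 - a) (Real.pi / 2)])
    filter_upwards [hF.eventually_im_iterate_lt hw hs hlim hsin] with n hn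
    have hout := mt (sin_mul_norm_le_im_of_abs_arg_sub_le hε.le) (not_le.2 hn)
    linarith [min_le_left (Real.pi / 2 - a) (Real.pi / 2), not_le.1 hout]
  · have h0 : 0 ≤ (F^[n] w).arg := arg_nonneg_iff.2 (hF.1.2.iterate n hw).le
    have hle : (F^[n] w).arg ≤ Real.pi := arg_le_pi _
    exact (abs_le.2 ⟨by linarith, by linarith⟩).trans_lt ha
end
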